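/- arXiv:2404.04348 — 2 statements merged into one kernel-verified Lean document; each statement's English description precedes it below -/
import Mathlib

section
/- Let T be a bounded operator on a complex Banach space H. Suppose there exist operators A1, A2 in the double commutant {T}'' of T such that A1 A2 = A2 A1 = 0 and A1² ≠ 0, A2² ≠ 0. Then the lattice of hyperinvariant subspaces of T is not totally ordered by inclusion; in particular, setting N_k = ker A_k and M_k = closure(A_k H), one has M_k ⊄ M_l and N_k ⊄ N_l for k ≠ l. -/
open scoped Real
open MeasureTheory Filter

variable {H : Type*} [NormedAddCommGroup H] [NormedSpace ℂ H] [CompleteSpace H]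

/-- The commutant of an operator `T`. -/
def commutant (T : H →L[ℂ] H) : Set (H →L[ℂ] H) := {A | A * T = T * A}

/-- The double commutant of an operator `T`. -/
def bicommutant (T : H →L[ℂ] H) : Set (H →L[ℂ] H) :=
  {A | ∀ B ∈ commutant T, A * B = B * A}

/-- A (closed) subspace invariant under every operator commuting with `T`. -/
def IsHyperinvariant (T : H →L[ℂ] H) (M : Submodule ℂ H) : Prop :=
  IsClosed (M : Set H) ∧ ∀ A ∈ commutant T, ∀ x ∈ M, A x ∈ M

/-! If `A * B = 0` then `range B ≤ ker A`, and since `ker A` is closed also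
`closure (range B) ≤ ker A`. So `closure (range A₁) ≤ closure (range A₂)` would force
`range A₁ ≤ ker A₁`, i.e. `A₁ * A₁ = 0`; likewise `ker A₁ ≤ ker A₂` would force
`range A₂ ≤ ker A₂`. The closed ranges are hyperinvariant because each `A_k` commutes with
the commutant of `T`, so they are two incomparable hyperinvariant subspaces. -/

namespace ContinuousLinearMap

variable {R M : Type*} [Semiring R] [AddCommMonoid M] [Module R M] [TopologicalSpace M]
  {A B : M →L[R] M}

theorem range_le_ker_iff_mul_eq_zero :
    LinearMap.range (B : M →ₗ[R] M) ≤ LinearMap.ker (A : M →ₗ[R] M) ↔ A * B = 0 := by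
  rw [LinearMap.range_le_ker_iff, ← Module.End.mul_eq_comp, ← toLinearMap_mul]
  exact coe_inj (f := A * B) (g := 0)

theorem not_ker_le_ker_of_mul_eq_zero (hAB : A * B = 0) (hBB : B * B ≠ 0) :
    ¬ LinearMap.ker (A : M →ₗ[R] M) ≤ LinearMap.ker (B : M →ₗ[R] M) := fun hle =>
  hBB (range_le_ker_iff_mul_eq_zero.mp ((range_le_ker_iff_mul_eq_zero.mpr hAB).trans hle))

theorem not_closure_range_le_closure_range_of_mul_eq_zero [ContinuousAdd M]
    [ContinuousConstSMul R M] [T1Space M] (hBA : B * A = 0) (hBB : B * B ≠ 0) :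
    ¬ (LinearMap.range (B : M →ₗ[R] M)).topologicalClosure ≤
      (LinearMap.range (A : M →ₗ[R] M)).topologicalClosure := fun hle => by
  have hker : (LinearMap.range (A : M →ₗ[R] M)).topologicalClosure ≤
      LinearMap.ker (B : M →ₗ[R] M) :=
    Submodule.topologicalClosure_minimal _ (range_le_ker_iff_mul_eq_zero.mpr hBA) (isClosed_ker B)
  exact hBB (range_le_ker_iff_mul_eq_zero.mp
    (((LinearMap.range (B : M →ₗ[R] M)).le_topologicalClosure.trans hle).trans hker))

end ContinuousLinearMap

open ContinuousLinearMap

omit [CompleteSpace H] in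
theorem isHyperinvariant_closure_range_of_mem_bicommutant {T A : H →L[ℂ] H}
    (hA : A ∈ bicommutant T) :
    IsHyperinvariant T (LinearMap.range (A : H →ₗ[ℂ] H)).topologicalClosure := by
  refine ⟨Submodule.isClosed_topologicalClosure _, fun B hB => ?_⟩
  have hrange : LinearMap.range (A : H →ₗ[ℂ] H) ∈ Module.End.invtSubmodule (B : H →ₗ[ℂ] H) := by
    rintro _ ⟨x, rfl⟩
    exact ⟨B x, congr($(hA B hB) x)⟩
  exact Submodule.topologicalClosure_mem_invtSubmodule hrange

theorem stmt0 (T A₁ A₂ : H →L[ℂ] H)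
    (h1 : A₁ ∈ bicommutant T) (h2 : A₂ ∈ bicommutant T)
    (h12 : A₁ * A₂ = 0) (h21 : A₂ * A₁ = 0)
    (hA1 : A₁ * A₁ ≠ 0) (hA2 : A₂ * A₂ ≠ 0) :
    (¬ (LinearMap.range (A₁ : H →ₗ[ℂ] H)).topologicalClosure ≤ (LinearMap.range (A₂ : H →ₗ[ℂ] H)).topologicalClosure) ∧
    (¬ (LinearMap.range (A₂ : H →ₗ[ℂ] H)).topologicalClosure ≤ (LinearMap.range (A₁ : H →ₗ[ℂ] H)).topologicalClosure) ∧
    (¬ LinearMap.ker (A₁ : H →ₗ[ℂ] H) ≤ LinearMap.ker (A₂ : H →ₗ[ℂ] H)) ∧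
    (¬ LinearMap.ker (A₂ : H →ₗ[ℂ] H) ≤ LinearMap.ker (A₁ : H →ₗ[ℂ] H)) ∧
    ∃ M N : Submodule ℂ H, IsHyperinvariant T M ∧ IsHyperinvariant T N ∧
      ¬ M ≤ N ∧ ¬ N ≤ M := by
  have hM₁₂ := not_closure_range_le_closure_range_of_mul_eq_zero h12 hA1
  have hM₂₁ := not_closure_range_le_closure_range_of_mul_eq_zero h21 hA2
  exact ⟨hM₁₂, hM₂₁, not_ker_le_ker_of_mul_eq_zero h12 hA2, not_ker_le_ker_of_mul_eq_zero h21 hA1,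
    _, _, isHyperinvariant_closure_range_of_mem_bicommutant h1,
    isHyperinvariant_closure_range_of_mem_bicommutant h2, hM₁₂, hM₂₁⟩
end

section
/- Let Γ be a rectifiable Jordan curve bounding a domain Ω, let f be in the Smirnov class E¹(Ω), let T be a bounded operator on a Banach space H with s(σ(T) ∩ Γ) = 0 (s the arc-length measure) and ess sup_{z∈Γ} |f(z)| ‖(zI−T)^{-1}‖ < ∞. Define A = (1/2πi) ∫_Γ f(z)(zI−T)^{-1} dz. Then A belongs to the double commutant {T}'' and for every natural number n, TⁿA = (1/2πi) ∫_Γ zⁿ f(z)(zI−T)^{-1} dz. -/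
open scoped Real
open MeasureTheory Filter

variable {H : Type*} [NormedAddCommGroup H] [NormedSpace ℂ H] [CompleteSpace H]

/-!
Off the spectrum, `T (zI - T)⁻¹ = z (zI - T)⁻¹ - I`. Multiplying `∫_Γ zⁿ f(z) (zI - T)⁻¹ dz` by `T`
therefore raises the power of `z` by one, up to the term `(∫_Γ zⁿ f(z) dz) I`, which vanishes since
all boundary moments of `f` vanish; induction gives `TⁿA`. An operator commuting with `T` commutes
with every resolvent, hence with `A`. The integrands are Bochner integrable because
`|f| ‖(zI - T)⁻¹‖` is essentially bounded on `Γ` and `γ'` is integrable for rectifiable `γ`.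
-/

namespace spectrum

variable {R A : Type*} [CommRing R] [Ring A] [Algebra R A]

theorem commute_resolvent {a b : A} (h : Commute b a) (r : R) : Commute b (resolvent a r) := by
  by_cases hr : r ∈ resolventSet R a
  · rw [resolvent_eq hr]
    exact ((Algebra.commute_algebraMap_right r b).sub_right h).units_inv_right
  · rw [resolvent_zero_of_mem_spectrum hr]
    exact Commute.zero_right b

theorem mul_resolvent_of_notMem {a : A} {r : R} (hr : r ∉ spectrum R a) :
    a * resolvent a r = r • resolvent a r - 1 := by
  have h := Ring.mul_inverse_cancel _ (not_not.mp hr)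
  rw [sub_mul, ← Algebra.smul_def] at h
  rw [resolvent, ← h, sub_sub_cancel]

end spectrum

theorem Complex.intervalIntegrable_deriv_of_boundedVariationOn {γ : ℝ → ℂ} {a b : ℝ}
    (hγ : BoundedVariationOn γ (Set.uIcc a b)) : IntervalIntegrable (deriv γ) volume a b := by
  have hre := (Complex.reCLM.lipschitz.comp_boundedVariationOn hγ).intervalIntegrable_deriv
  have him := (Complex.imCLM.lipschitz.comp_boundedVariationOn hγ).intervalIntegrable_deriv
  refine (hre.norm.add him.norm).mono_fun' (measurable_deriv γ).aestronglyMeasurable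
    (Eventually.of_forall fun t => ?_)
  by_cases hd : DifferentiableAt ℝ γ t
  · have hre' := (Complex.reCLM.hasFDerivAt.comp_hasDerivAt t hd.hasDerivAt).deriv
    have him' := (Complex.imCLM.hasFDerivAt.comp_hasDerivAt t hd.hasDerivAt).deriv
    simp only [Complex.reCLM_apply, Complex.imCLM_apply] at hre' him'
    simpa [hre', him'] using Complex.norm_le_abs_re_add_abs_im (deriv γ t)
  · show ‖deriv γ t‖ ≤ _
    rw [deriv_zero_of_not_differentiableAt hd, norm_zero]
    positivity

theorem Set.InjOn.ae_restrict_ne {α β : Type*} [MeasurableSpace α] {μ : Measure α}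
    [NullSingletonClass μ] {f : α → β} {s : Set α} (hf : InjOn f s) (hs : MeasurableSet s)
    (b : β) : ∀ᵐ x ∂μ.restrict s, f x ≠ b := by
  have hsub : {x | x ∈ s ∧ f x = b}.Subsingleton := fun x hx y hy =>
    hf hx.1 hy.1 (hx.2.trans hy.2.symm)
  rw [ae_restrict_iff' hs]
  refine measure_mono_null (fun x hx => ?_) (hsub.measure_zero μ)
  simpa only [Set.mem_compl_iff, Set.mem_ofPred_eq, Classical.not_imp, not_not] using hx

section Integral

variable {α : Type*} [MeasurableSpace α] {μ : Measure α}

theorem aestronglyMeasurable_smul_iff_of_ae_ne_zero {E : Type*} [NormedAddCommGroup E]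
    [NormedSpace ℂ E] {c : α → ℂ} {F : α → E} (hc : AEStronglyMeasurable c μ)
    (hc0 : ∀ᵐ x ∂μ, c x ≠ 0) :
    AEStronglyMeasurable (fun x => c x • F x) μ ↔ AEStronglyMeasurable F μ := by
  refine ⟨fun h => (hc.aemeasurable.inv.aestronglyMeasurable.smul h).congr ?_, hc.smul⟩
  filter_upwards [hc0] with x hx
  exact inv_smul_smul₀ hx (F x)

/-- If `φ • F` is not a.e. strongly measurable, neither is any `z ^ n • φ • F` (as `z ≠ 0` a.e.),
so all these Bochner integrals take the junk value `0`. -/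
theorem integrable_pow_mul_smul_or_integral_pow_mul_smul_eq_zero {E : Type*}
    [NormedAddCommGroup E] [NormedSpace ℂ E] {z φ : α → ℂ} {F : α → E} {g : α → ℝ} {M : ℝ}
    (hz : AEStronglyMeasurable z μ) (hz0 : ∀ᵐ x ∂μ, z x ≠ 0) (hzM : ∀ᵐ x ∂μ, ‖z x‖ ≤ M)
    (hg : Integrable g μ) (hF : ∀ᵐ x ∂μ, ‖φ x • F x‖ ≤ g x) :
    (∀ n : ℕ, Integrable (fun x => (z x ^ n * φ x) • F x) μ) ∨
      ∀ n : ℕ, ∫ x, (z x ^ n * φ x) • F x ∂μ = 0 := by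
  simp only [mul_smul]
  by_cases hm : AEStronglyMeasurable (fun x => φ x • F x) μ
  · refine Or.inl fun n => (hg.mono' hm hF).bdd_smul (M ^ n) (hz.pow n) ?_
    filter_upwards [hzM] with x hx
    rw [norm_pow]
    exact pow_le_pow_left₀ (norm_nonneg _) hx n
  · refine Or.inr fun n => integral_undef fun h => hm ?_
    exact (aestronglyMeasurable_smul_iff_of_ae_ne_zero (hz.pow n)
      (hz0.mono fun x hx => pow_ne_zero n hx)).1 h.aestronglyMeasurable

theorem Commute.integral_right {𝒜 : Type*} [NormedRing 𝒜] [NormedAlgebra ℝ 𝒜] {b : 𝒜}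
    {F : α → 𝒜} (hF : Integrable F μ) (h : ∀ᵐ x ∂μ, Commute b (F x)) :
    Commute b (∫ x, F x ∂μ) := by
  rw [Commute, SemiconjBy, ← integral_const_mul_of_integrable hF,
    ← integral_mul_const_of_integrable hF]
  exact integral_congr_ae (h.mono fun x hx => hx.eq)

variable {𝒜 : Type*} [NormedRing 𝒜] [NormedAlgebra ℂ 𝒜] {a : 𝒜} {z φ : α → ℂ}

theorem Commute.integral_smul_resolvent {b : 𝒜} (h : Commute b a)
    (hint : Integrable (fun x => φ x • resolvent a (z x)) μ) :
    Commute b (∫ x, φ x • resolvent a (z x) ∂μ) :=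
  Commute.integral_right hint
    (Eventually.of_forall fun x => (spectrum.commute_resolvent h (z x)).smul_right _)

variable [CompleteSpace 𝒜]

/-- By `a R(z) = z R(z) - 1`, the two sides differ by `(∫ φ) • 1 = 0`. -/
theorem mul_integral_smul_resolvent (hz : ∀ᵐ x ∂μ, z x ∉ spectrum ℂ a) (hφ : ∫ x, φ x ∂μ = 0)
    (h₁ : Integrable (fun x => φ x • resolvent a (z x)) μ)
    (h₂ : Integrable (fun x => (z x * φ x) • resolvent a (z x)) μ) :
    a * ∫ x, φ x • resolvent a (z x) ∂μ = ∫ x, (z x * φ x) • resolvent a (z x) ∂μ := by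
  have hdiff : (fun x => (z x * φ x) • resolvent a (z x) - a * (φ x • resolvent a (z x)))
      =ᵐ[μ] fun x => φ x • (1 : 𝒜) := by
    filter_upwards [hz] with x hx
    rw [mul_smul_comm, spectrum.mul_resolvent_of_notMem hx, smul_sub, mul_comm, mul_smul, sub_sub_cancel]
  have h := integral_congr_ae hdiff
  rw [integral_sub h₂ (h₁.const_mul a), integral_smul_const, hφ, zero_smul, sub_eq_zero] at h
  rw [← integral_const_mul_of_integrable h₁, h]

theorem pow_mul_integral_smul_resolvent (hz : ∀ᵐ x ∂μ, z x ∉ spectrum ℂ a)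
    (hmom : ∀ n : ℕ, ∫ x, z x ^ n * φ x ∂μ = 0)
    (hint : ∀ n : ℕ, Integrable (fun x => (z x ^ n * φ x) • resolvent a (z x)) μ) (n : ℕ) :
    a ^ n * ∫ x, φ x • resolvent a (z x) ∂μ = ∫ x, (z x ^ n * φ x) • resolvent a (z x) ∂μ := by
  induction n with
  | zero => simp only [pow_zero, one_mul]
  | succ n ih =>
    have hshift : ∀ x, z x ^ (n + 1) * φ x = z x * (z x ^ n * φ x) := fun x => by ring
    have hnext := hint (n + 1)
    simp only [hshift] at hnext ⊢
    rw [pow_succ', mul_assoc, ih, mul_integral_smul_resolvent hz (hmom n) (hint n) hnext]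

theorem commute_and_pow_mul_integral_smul_resolvent {g : α → ℝ} {M : ℝ}
    (hspec : ∀ᵐ x ∂μ, z x ∉ spectrum ℂ a) (hmom : ∀ n : ℕ, ∫ x, z x ^ n * φ x ∂μ = 0)
    (hz : AEStronglyMeasurable z μ) (hz0 : ∀ᵐ x ∂μ, z x ≠ 0) (hzM : ∀ᵐ x ∂μ, ‖z x‖ ≤ M)
    (hg : Integrable g μ) (hφ : ∀ᵐ x ∂μ, ‖φ x • resolvent a (z x)‖ ≤ g x) :
    (∀ b : 𝒜, Commute b a → Commute b (∫ x, φ x • resolvent a (z x) ∂μ)) ∧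
      ∀ n : ℕ, a ^ n * ∫ x, φ x • resolvent a (z x) ∂μ =
        ∫ x, (z x ^ n * φ x) • resolvent a (z x) ∂μ := by
  rcases integrable_pow_mul_smul_or_integral_pow_mul_smul_eq_zero hz hz0 hzM hg hφ
    with hint | hzero
  · have hint₀ := hint 0
    simp only [pow_zero, one_mul] at hint₀
    exact ⟨fun b hb => hb.integral_smul_resolvent hint₀,
      pow_mul_integral_smul_resolvent hspec hmom hint⟩
  · have hzero₀ := hzero 0
    simp only [pow_zero, one_mul] at hzero₀
    rw [hzero₀]
    exact ⟨fun b _ => Commute.zero_right b, fun n => by rw [mul_zero, hzero n]⟩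

end Integral

theorem stmt5_general (T : H →L[ℂ] H) (γ : ℝ → ℂ) (f : ℂ → ℂ)
    (hγc : ContinuousOn γ (Set.Icc 0 1))
    (hγinj : Set.InjOn γ (Set.Ico 0 1))
    (hγrect : eVariationOn γ (Set.Icc 0 1) ≠ ⊤)
    (hmom : ∀ n : ℕ, ∫ t in (0:ℝ)..1, (γ t) ^ n * f (γ t) * deriv γ t = 0)
    (hspec : ∀ᵐ t ∂(volume.restrict (Set.Ioc (0:ℝ) 1)), γ t ∉ spectrum ℂ T)
    (hbd : ∃ C : ℝ, ∀ᵐ t ∂(volume.restrict (Set.Ioc (0:ℝ) 1)),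
      ‖f (γ t)‖ * ‖resolvent T (γ t)‖ ≤ C)
    (A : H →L[ℂ] H)
    (hA : A = (2 * π * Complex.I)⁻¹ •
      ∫ t in (0:ℝ)..1, (f (γ t) * deriv γ t) • resolvent T (γ t)) :
    A ∈ bicommutant T ∧
    ∀ n : ℕ, 1 ≤ n → T ^ n * A = (2 * π * Complex.I)⁻¹ •
      ∫ t in (0:ℝ)..1, ((γ t) ^ n * f (γ t) * deriv γ t) • resolvent T (γ t) := by
  obtain ⟨C, hC⟩ := hbd
  obtain ⟨M, hM⟩ := isCompact_Icc.exists_bound_of_continuousOn hγc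
  have hγ' : IntegrableOn (deriv γ) (Set.Ioc 0 1) :=
    (Complex.intervalIntegrable_deriv_of_boundedVariationOn
      (by rwa [Set.uIcc_of_le zero_le_one])).1
  have hγM : ∀ᵐ t ∂(volume.restrict (Set.Ioc (0:ℝ) 1)), ‖γ t‖ ≤ M := by
    filter_upwards [ae_restrict_mem measurableSet_Ioc] with t ht
    exact hM t (Set.Ioc_subset_Icc_self ht)
  have hγ0 : ∀ᵐ t ∂(volume.restrict (Set.Ioc (0:ℝ) 1)), γ t ≠ 0 := by
    have h := hγinj.ae_restrict_ne (μ := volume) measurableSet_Ico 0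
    rwa [Measure.restrict_congr_set Ico_ae_eq_Ioc] at h
  have hbound : ∀ᵐ t ∂(volume.restrict (Set.Ioc (0:ℝ) 1)),
      ‖(f (γ t) * deriv γ t) • resolvent T (γ t)‖ ≤ C * ‖deriv γ t‖ := by
    filter_upwards [hC] with t ht
    rw [norm_smul, norm_mul, mul_right_comm]
    exact mul_le_mul_of_nonneg_right ht (norm_nonneg _)
  simp only [intervalIntegral.integral_of_le zero_le_one, mul_assoc] at hmom hA ⊢
  obtain ⟨hcomm, hpow⟩ := commute_and_pow_mul_integral_smul_resolvent
    (φ := fun t => f (γ t) * deriv γ t) hspec hmom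
    ((hγc.mono Set.Ioc_subset_Icc_self).aestronglyMeasurable measurableSet_Ioc) hγ0 hγM
    (hγ'.norm.const_mul C) hbound
  rw [hA]
  exact ⟨fun B hB => ((hcomm B hB).smul_right _).symm.eq,
    fun n _ => by rw [mul_smul_comm, hpow n]⟩

/-- Lemma on the contour-integral operator `A`: it lies in the double commutant, and
`TⁿA` is given by inserting `zⁿ` in the integrand. The rectifiable Jordan curve `Γ`
is parametrized by `γ` on `[0,1]`, `Ω` is the bounded Jordan domain it bounds, the
Smirnov-class membership of `f` is encoded by analyticity in `Ω` together with the
vanishing of all boundary moments `∫_Γ zⁿ f(z) dz = 0`. -/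
theorem stmt5 (T : H →L[ℂ] H) (γ : ℝ → ℂ) (Ω : Set ℂ) (f : ℂ → ℂ)
    (hγc : ContinuousOn γ (Set.Icc 0 1)) (hγcl : γ 0 = γ 1)
    (hγinj : Set.InjOn γ (Set.Ico 0 1))
    (hγrect : eVariationOn γ (Set.Icc 0 1) ≠ ⊤)
    (hΩo : IsOpen Ω) (hΩb : Bornology.IsBounded Ω)
    (hΩfr : frontier Ω = γ '' Set.Icc 0 1)
    (hf : DifferentiableOn ℂ f Ω)
    (hmom : ∀ n : ℕ, ∫ t in (0:ℝ)..1, (γ t) ^ n * f (γ t) * deriv γ t = 0)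
    (hspec : ∀ᵐ t ∂(volume.restrict (Set.Ioc (0:ℝ) 1)), γ t ∉ spectrum ℂ T)
    (hbd : ∃ C : ℝ, ∀ᵐ t ∂(volume.restrict (Set.Ioc (0:ℝ) 1)),
      ‖f (γ t)‖ * ‖resolvent T (γ t)‖ ≤ C)
    (A : H →L[ℂ] H)
    (hA : A = (2 * π * Complex.I)⁻¹ •
      ∫ t in (0:ℝ)..1, (f (γ t) * deriv γ t) • resolvent T (γ t)) :
    A ∈ bicommutant T ∧
    ∀ n : ℕ, 1 ≤ n → T ^ n * A = (2 * π * Complex.I)⁻¹ •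
      ∫ t in (0:ℝ)..1, ((γ t) ^ n * f (γ t) * deriv γ t) • resolvent T (γ t) :=
  stmt5_general T γ f hγc hγinj hγrect hmom hspec hbd A hA
end
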